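/- arXiv:1601.03164 — 4 statements merged into one kernel-verified Lean document; each statement's English description precedes it below -/
import Mathlib

section
/- Let λ_j, λ_m > 0 and let κ ≥ 1 be real numbers. Then ∫_{r=0}^{∞} ∫_{u=κr}^{∞} 4(πλ_j)^2 · r · u · e^{−πλ_j u^2} · ( e^{−πλ_m κ^2 r^2} − e^{−πλ_m u^2} ) du dr = λ_j λ_m κ^{−2} / (λ_j + λ_m)^2. (This is the closed form in Lemma 1 for the probability Pr(X^{(j,m)}), j ≠ m, that the typical mobile terminal associates with tier j while its most interfered base station belongs to tier m, in the regime where κ = (t^{(m)}/t^{(j)})^{1/α} ≥ 1, so that λ_j λ_m κ^{−2}/(λ_j+λ_m)^2 = λ_j λ_m (t^{(j)}/t^{(m)})^{2/α}/(λ_j+λ_m)^2.) -/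
open MeasureTheory Real Set Filter

/-!
Substitute `a = π λ_j`, `b = π λ_m`. For fixed `r`, both terms of the inner integrand are of
the form `u e^{-c u²}`, whose antiderivative is `-e^{-c u²} / (2c)`; evaluated from `s = κ r`
the two pieces combine to `b e^{-(a+b) s²} / (2a(a+b))`. The outer integral is then again of
the form `∫₀^∞ r e^{-c r²} dr = 1/(2c)` with `c = (a+b) κ²`.
-/

theorem integrableOn_mul_exp_neg_mul_sq {a : ℝ} (ha : 0 < a) (s : Set ℝ) :
    IntegrableOn (fun u : ℝ => u * exp (-(a * u ^ 2))) s := by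
  simpa only [neg_mul] using (integrable_mul_exp_neg_mul_sq ha).integrableOn

theorem integral_Ioi_mul_exp_neg_mul_sq {a : ℝ} (ha : 0 < a) (s : ℝ) :
    ∫ u in Ioi s, u * exp (-(a * u ^ 2)) = exp (-(a * s ^ 2)) / (2 * a) := by
  have hderiv : ∀ x ∈ Ici s, HasDerivAt (fun u : ℝ => -exp (-(a * u ^ 2)) / (2 * a))
      (x * exp (-(a * x ^ 2))) x := by
    intro x _
    have hexponent : HasDerivAt (fun u : ℝ => -(a * u ^ 2)) (-(a * (2 * x))) x := by
      simpa using ((hasDerivAt_pow 2 x).const_mul a).fun_neg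
    refine (hexponent.exp.fun_neg.div_const (2 * a)).congr_deriv ?_
    field_simp
  have hlim : Tendsto (fun u : ℝ => -exp (-(a * u ^ 2)) / (2 * a)) atTop (nhds 0) := by
    have hexponent : Tendsto (fun u : ℝ => -(a * u ^ 2)) atTop atBot :=
      tendsto_neg_atBot_iff.mpr ((tendsto_pow_atTop two_ne_zero).const_mul_atTop ha)
    simpa using (tendsto_exp_atBot.comp hexponent).neg.div_const (2 * a)
  rw [integral_Ioi_of_hasDerivAt_of_tendsto' hderiv (integrableOn_mul_exp_neg_mul_sq ha _) hlim]
  ring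

theorem integral_Ioi_mul_exp_neg_mul_sq_mul_sub {a b : ℝ} (ha : 0 < a) (hb : 0 < b) (s : ℝ) :
    ∫ u in Ioi s, u * exp (-(a * u ^ 2)) * (exp (-(b * s ^ 2)) - exp (-(b * u ^ 2))) =
      b / (2 * a * (a + b)) * exp (-((a + b) * s ^ 2)) := by
  have hsplit : ∀ u : ℝ, u * exp (-(a * u ^ 2)) * (exp (-(b * s ^ 2)) - exp (-(b * u ^ 2))) =
      exp (-(b * s ^ 2)) * (u * exp (-(a * u ^ 2))) - u * exp (-((a + b) * u ^ 2)) := by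
    intro u
    rw [mul_sub, add_mul, neg_add, exp_add]
    ring
  simp_rw [hsplit]
  rw [integral_sub ((integrableOn_mul_exp_neg_mul_sq ha _).const_mul _)
      (integrableOn_mul_exp_neg_mul_sq (add_pos ha hb) _), integral_const_mul,
    integral_Ioi_mul_exp_neg_mul_sq ha, integral_Ioi_mul_exp_neg_mul_sq (add_pos ha hb),
    add_mul, neg_add, exp_add]
  field_simp
  ring

/-- Lemma 1 (case j ≠ m, κ = (t⁽ᵐ⁾/t⁽ʲ⁾)^{1/α} ≥ 1): closed form of
Pr(X^{(j,m)}) as an explicit double integral. -/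
theorem stmt_0 (lj lm κ : ℝ) (hlj : 0 < lj) (hlm : 0 < lm) (hκ : 1 ≤ κ) :
    (∫ r in Ioi (0:ℝ), ∫ u in Ioi (κ * r),
      4 * (π * lj) ^ 2 * r * u * Real.exp (-(π * lj * u ^ 2)) *
        (Real.exp (-(π * lm * κ ^ 2 * r ^ 2)) - Real.exp (-(π * lm * u ^ 2))))
    = lj * lm * κ ^ (-2 : ℤ) / (lj + lm) ^ 2 := by
  set a := π * lj
  set b := π * lm
  have ha : 0 < a := mul_pos pi_pos hlj
  have hb : 0 < b := mul_pos pi_pos hlm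
  have hκ0 : κ ≠ 0 := (zero_lt_one.trans_le hκ).ne'
  have hinner : ∀ r : ℝ, (∫ u in Ioi (κ * r), 4 * a ^ 2 * r * u * exp (-(a * u ^ 2)) *
      (exp (-(b * κ ^ 2 * r ^ 2)) - exp (-(b * u ^ 2)))) =
      2 * a * b / (a + b) * (r * exp (-((a + b) * κ ^ 2 * r ^ 2))) := by
    intro r
    have hfactor : ∀ u : ℝ, 4 * a ^ 2 * r * u * exp (-(a * u ^ 2)) *
        (exp (-(b * κ ^ 2 * r ^ 2)) - exp (-(b * u ^ 2))) = 4 * a ^ 2 * r *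
        (u * exp (-(a * u ^ 2)) * (exp (-(b * (κ * r) ^ 2)) - exp (-(b * u ^ 2)))) := by
      intro u
      ring_nf
    simp_rw [hfactor]
    rw [integral_const_mul, integral_Ioi_mul_exp_neg_mul_sq_mul_sub ha hb]
    field_simp
    ring
  simp_rw [hinner]
  rw [integral_const_mul, integral_Ioi_mul_exp_neg_mul_sq (by positivity : 0 < (a + b) * κ ^ 2),
    zero_pow two_ne_zero, mul_zero, neg_zero, exp_zero, zpow_neg, zpow_two]
  field_simp
  ring
end

section
/- Let α > 2, ρ_0 > 0 and x be real numbers with 0 < x < ρ_0^{α}. Then ∫_{ρ_0}^{∞} ( x ρ^{−α} / (1 + x ρ^{−α}) ) · ρ dρ = x ρ_0^{2−α} · Σ_{n=0}^{∞} (−x ρ_0^{−α})^{n} / ( α(n+1) − 2 ). (The right-hand side equals (x ρ_0^{2−α}/(α−2)) · ₂F₁(1, (α−2)/α; 2 − 2/α; −x ρ_0^{−α}), which is the hypergeometric closed form appearing in Lemma 3 for the inner radial integral of the Laplace transform of the interference.) -/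
open MeasureTheory Real Set

private lemma aux_c_lt (α : ℝ) (hα : 2 < α) (n : ℕ) :
    1 - α * ((n : ℝ) + 1) < -1 := by
  have hn : (0 : ℝ) ≤ (n : ℝ) := Nat.cast_nonneg n
  nlinarith

private lemma aux_pos (α : ℝ) (hα : 2 < α) (n : ℕ) :
    0 < α * ((n : ℝ) + 1) - 2 := by
  have hn : (0 : ℝ) ≤ (n : ℝ) := Nat.cast_nonneg n
  nlinarith

/-- Inner radial integral in the Laplace transform of the interference
(Lemma 3): for α > 2 and 0 < x < ρ₀^α,
∫_{ρ₀}^∞ (x ρ^{−α}/(1 + x ρ^{−α})) ρ dρ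
  = x ρ₀^{2−α} Σ_{n≥0} (−x ρ₀^{−α})ⁿ / (α(n+1) − 2),
the series form of the ₂F₁ hypergeometric closed form. -/
theorem stmt_7 (α ρ0 x : ℝ) (hα : 2 < α) (hρ0 : 0 < ρ0)
    (hx : 0 < x) (hxρ : x < ρ0 ^ α) :
    (∫ ρ in Ioi ρ0, (x * ρ ^ (-α) / (1 + x * ρ ^ (-α))) * ρ)
    = x * ρ0 ^ (2 - α) *
        ∑' n : ℕ, (-(x * ρ0 ^ (-α))) ^ n / (α * ((n : ℝ) + 1) - 2) := by
  -- the ratio r = x ρ0^{-α} is in (0,1)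
  set r : ℝ := x * ρ0 ^ (-α) with hr
  have hρ0α : (0:ℝ) < ρ0 ^ (-α) := rpow_pos_of_pos hρ0 _
  have hrpos : 0 < r := mul_pos hx hρ0α
  have hr1 : r < 1 := by
    have := mul_lt_mul_of_pos_right hxρ hρ0α
    rwa [← rpow_add hρ0, add_neg_cancel, rpow_zero] at this
  -- the series of functions
  set f : ℕ → ℝ → ℝ := fun n ρ => (-x) ^ n * x * ρ ^ (1 - α * ((n : ℝ) + 1)) with hf
  -- pointwise identity on Ioi ρ0
  have hpt : ∀ ρ ∈ Ioi ρ0,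
      (x * ρ ^ (-α) / (1 + x * ρ ^ (-α))) * ρ = ∑' n : ℕ, f n ρ := by
    intro ρ hρ
    have hρpos : (0:ℝ) < ρ := hρ0.trans hρ
    set t : ℝ := x * ρ ^ (-α) with ht
    have htpos : 0 < t := mul_pos hx (rpow_pos_of_pos hρpos _)
    have ht1 : t < 1 := by
      have h1 : ρ ^ (-α) < ρ0 ^ (-α) :=
        rpow_lt_rpow_of_neg hρ0 hρ (by linarith)
      have : t < r := mul_lt_mul_of_pos_left h1 hx
      linarith
    have hgeom : ∑' n : ℕ, (-t) ^ n = (1 + t)⁻¹ := by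
      rw [tsum_geometric_of_abs_lt_one (by rw [abs_neg, abs_of_pos htpos]; exact ht1),
        sub_neg_eq_add]
    have hterm : ∀ n : ℕ, f n ρ = (-t) ^ n * (t * ρ) := by
      intro n
      have h1 : ρ ^ (1 - α * ((n : ℝ) + 1))
          = (ρ ^ (-α)) ^ n * (ρ ^ (-α) * ρ) := by
        rw [show (1 - α * ((n : ℝ) + 1)) = (-α) * (n : ℝ) + (-α + 1) by ring,
          rpow_add hρpos, rpow_add hρpos, rpow_mul hρpos.le, rpow_natCast,
          rpow_one]
      calc f n ρ = (-x) ^ n * x * ((ρ ^ (-α)) ^ n * (ρ ^ (-α) * ρ)) := by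
            rw [hf]; simp only []; rw [h1]
        _ = ((-x) * ρ ^ (-α)) ^ n * (x * ρ ^ (-α) * ρ) := by rw [mul_pow]; try ring
        _ = (-t) ^ n * (t * ρ) := by rw [ht]; try rw [neg_mul]; try ring
    calc (t / (1 + t)) * ρ = (∑' n : ℕ, (-t) ^ n) * (t * ρ) := by
          rw [hgeom]; field_simp; try ring
      _ = ∑' n : ℕ, (-t) ^ n * (t * ρ) := (tsum_mul_right).symm
      _ = ∑' n : ℕ, f n ρ := by exact tsum_congr fun n => (hterm n).symm
  -- integrability of each term
  have hint : ∀ n : ℕ, IntegrableOn (f n) (Ioi ρ0) := by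
    intro n
    have := integrableOn_Ioi_rpow_of_lt (aux_c_lt α hα n) hρ0
    exact this.const_mul ((-x) ^ n * x)
  -- value of each term's integral
  have hval : ∀ n : ℕ, (∫ ρ in Ioi ρ0, f n ρ)
      = (-x) ^ n * x * (ρ0 ^ (2 - α * ((n : ℝ) + 1)) / (α * ((n : ℝ) + 1) - 2)) := by
    intro n
    rw [hf]
    simp only []
    rw [MeasureTheory.integral_const_mul, integral_Ioi_rpow_of_lt (aux_c_lt α hα n) hρ0]
    have h2 : 1 - α * ((n : ℝ) + 1) + 1 = 2 - α * ((n : ℝ) + 1) := by ring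
    rw [h2, show (2 - α * ((n : ℝ) + 1)) = -(α * ((n : ℝ) + 1) - 2) by ring,
      div_neg, neg_div, neg_neg]
  -- swap integral and sum
  have hmeas : ∀ n : ℕ, AEStronglyMeasurable (f n) (volume.restrict (Ioi ρ0)) :=
    fun n => (hint n).aestronglyMeasurable
  have hbound : ∑' n : ℕ, ∫⁻ ρ in Ioi ρ0, ‖f n ρ‖₊ ≠ ⊤ := by
    have hAeq : ∀ n : ℕ, (∫⁻ ρ in Ioi ρ0, ‖f n ρ‖₊)
        = ENNReal.ofReal (∫ ρ in Ioi ρ0, ‖f n ρ‖) :=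
      fun n => (ofReal_integral_norm_eq_lintegral_enorm (hint n)).symm
    have hnormval : ∀ n : ℕ, (∫ ρ in Ioi ρ0, ‖f n ρ‖)
        = x ^ (n + 1) * (ρ0 ^ (2 - α * ((n : ℝ) + 1)) / (α * ((n : ℝ) + 1) - 2)) := by
      intro n
      have : ∀ ρ ∈ Ioi ρ0, ‖f n ρ‖ = x ^ (n + 1) * ρ ^ (1 - α * ((n : ℝ) + 1)) := by
        intro ρ hρ
        have hρpos : (0:ℝ) < ρ := hρ0.trans hρ
        rw [hf]
        simp only []
        rw [Real.norm_eq_abs, abs_mul, abs_mul, abs_pow, abs_neg,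
          abs_of_pos hx, abs_of_pos (rpow_pos_of_pos hρpos _), pow_succ]
        try ring
      rw [setIntegral_congr_fun measurableSet_Ioi this, MeasureTheory.integral_const_mul,
        integral_Ioi_rpow_of_lt (aux_c_lt α hα n) hρ0]
      have h2 : 1 - α * ((n : ℝ) + 1) + 1 = 2 - α * ((n : ℝ) + 1) := by ring
      rw [h2, show (2 - α * ((n : ℝ) + 1)) = -(α * ((n : ℝ) + 1) - 2) by ring,
        div_neg, neg_div, neg_neg]
    -- bound the series by a geometric series
    have hC : (0:ℝ) < x * ρ0 ^ (2 - α) / (α - 2) := by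
      apply div_pos (mul_pos hx (rpow_pos_of_pos hρ0 _)); linarith
    have hterm_le : ∀ n : ℕ,
        x ^ (n + 1) * (ρ0 ^ (2 - α * ((n : ℝ) + 1)) / (α * ((n : ℝ) + 1) - 2))
        ≤ (x * ρ0 ^ (2 - α) / (α - 2)) * r ^ n := by
      intro n
      have hsplit : ρ0 ^ (2 - α * ((n : ℝ) + 1)) = ρ0 ^ (2 - α) * (ρ0 ^ (-α)) ^ n := by
        rw [← rpow_natCast (ρ0 ^ (-α)) n, ← rpow_mul hρ0.le, ← rpow_add hρ0]
        ring_nf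
      rw [hsplit]
      have h1 : x ^ (n + 1) * (ρ0 ^ (2 - α) * (ρ0 ^ (-α)) ^ n / (α * ((n : ℝ) + 1) - 2))
          = (x * ρ0 ^ (2 - α) / (α * ((n : ℝ) + 1) - 2)) * r ^ n := by
        rw [hr, mul_pow, pow_succ]
        ring
      rw [h1]
      apply mul_le_mul_of_nonneg_right _ (pow_nonneg hrpos.le n)
      exact div_le_div_of_nonneg_left (mul_pos hx (rpow_pos_of_pos hρ0 _)).le
        (by linarith)
        (by have hn : (0:ℝ) ≤ (n:ℝ) := Nat.cast_nonneg n; nlinarith)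
    have hlt : (∑' n : ℕ, ∫⁻ ρ in Ioi ρ0, ‖f n ρ‖₊) < ⊤ := by
      calc ∑' n : ℕ, ∫⁻ ρ in Ioi ρ0, ‖f n ρ‖₊
          ≤ ∑' n : ℕ, ENNReal.ofReal ((x * ρ0 ^ (2 - α) / (α - 2)) * r ^ n) := by
            apply ENNReal.tsum_le_tsum
            intro n
            rw [hAeq n, hnormval n]
            exact ENNReal.ofReal_le_ofReal (hterm_le n)
        _ = ENNReal.ofReal (x * ρ0 ^ (2 - α) / (α - 2)) *
              ∑' n : ℕ, (ENNReal.ofReal r) ^ n := by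
            rw [← ENNReal.tsum_mul_left]
            congr 1
            ext n
            rw [ENNReal.ofReal_mul hC.le, ENNReal.ofReal_pow hrpos.le]
        _ < ⊤ := by
            apply ENNReal.mul_lt_top ENNReal.ofReal_lt_top
            rw [ENNReal.tsum_geometric]
            exact ENNReal.inv_lt_top.mpr (by
              rw [tsub_pos_iff_lt]; exact ENNReal.ofReal_lt_one.mpr hr1)
    exact hlt.ne
  have hswap : (∫ ρ in Ioi ρ0, ∑' n : ℕ, f n ρ) = ∑' n : ℕ, ∫ ρ in Ioi ρ0, f n ρ :=
    integral_tsum hmeas hbound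
  rw [setIntegral_congr_fun measurableSet_Ioi hpt, hswap]
  -- rearrange the series
  rw [← tsum_mul_left]
  apply tsum_congr
  intro n
  rw [hval n]
  have hsplit : ρ0 ^ (2 - α * ((n : ℝ) + 1)) = ρ0 ^ (2 - α) * (ρ0 ^ (-α)) ^ n := by
    rw [← rpow_natCast (ρ0 ^ (-α)) n, ← rpow_mul hρ0.le, ← rpow_add hρ0]
    ring_nf
  rw [hsplit]
  have : (-(x * ρ0 ^ (-α))) ^ n = (-x) ^ n * (ρ0 ^ (-α)) ^ n := by
    rw [← mul_pow]; ring_nf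
  rw [this]
  ring
end

section
/- Let α > 2, λ > 0, i_0 > 0 and s > 0 be real numbers with s · i_0 < 1. Then 2πλ ∫_{r=0}^{∞} ∫_{u=r}^{∞} 4(πλ)^2 r u e^{−πλ u^2} · [ ∫_{ρ=u}^{∞} ( s i_0 u^{α} ρ^{1−α} ) / ( 1 + s i_0 u^{α} ρ^{−α} ) dρ ] du dr = 4 s i_0 · Σ_{n=0}^{∞} (−s i_0)^{n} / ( α(n+1) − 2 ). In particular, the value of this triple integral does not depend on λ. (The right-hand side equals (4 s i_0/(α−2)) · ₂F₁(1, (α−2)/α; 2 − 2/α; −s i_0), so this is the closed-form exponent of the Laplace transform of the interference in the low-i_0 regime under minimum path loss association, L_I^{(i_0∼0)}(s) = exp(−(4 s i_0/(α−2)) ₂F₁(1,(α−2)/α;2−2/α;−s i_0)), together with the paper's Remark 1 that all interference statistics are then independent of the base station density λ.) -/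
open MeasureTheory Real Set Filter Topology

/-!
Substituting `ρ = u x` shows that the `ρ`-integral is `u ^ 2 * J`, where `J` is the same integral
for `u = 1`; the factor `u ^ 2` has expectation `2 / (π λ)` under the joint density of `(R, U)`,
which cancels the prefactor `2 π λ` and leaves `4 J`. Expanding `1 / (1 + c x ^ (-α))` as a
geometric series (`|c x ^ (-α)| ≤ |c| < 1` on `x > 1`) and integrating termwise gives the series
for `J`.
-/

lemma integral_Ioi_one_rpow_one_sub {β : ℝ} (hβ : 2 < β) :
    ∫ x in Ioi (1 : ℝ), x ^ (1 - β) = (β - 2)⁻¹ := by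
  rw [integral_Ioi_rpow_of_lt (by linarith) one_pos, one_rpow, neg_div, ← div_neg, one_div]
  ring_nf

lemma hasSum_geometric_interference {α c x : ℝ} (hα : 0 ≤ α) (hc : |c| < 1) (hx : 1 ≤ x) :
    HasSum (fun n : ℕ => (-c) ^ n * c * x ^ (1 - α * ((n : ℝ) + 1)))
      (c * x ^ (1 - α) / (1 + c * x ^ (-α))) := by
  have hx0 : 0 < x := one_pos.trans_le hx
  have hxα : 0 < x ^ (-α) := rpow_pos_of_pos hx0 _
  have hratio : |-(c * x ^ (-α))| < 1 := by
    rw [abs_neg, abs_mul, abs_of_pos hxα]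
    calc |c| * x ^ (-α) ≤ |c| * 1 := by
          gcongr
          exact rpow_le_one_of_one_le_of_nonpos hx (by linarith)
      _ < 1 := by rwa [mul_one]
  have hgeom := (hasSum_geometric_of_abs_lt_one hratio).mul_left (c * x ^ (1 - α))
  rw [sub_neg_eq_add, ← div_eq_mul_inv] at hgeom
  refine hgeom.congr_fun fun n => ?_
  rw [show 1 - α * ((n : ℝ) + 1) = (1 - α) + -α * n by ring, rpow_add hx0, rpow_mul hx0.le,
    rpow_natCast, neg_mul_eq_neg_mul, mul_pow]
  ring

lemma integral_Ioi_one_interference_eq_tsum {α c : ℝ} (hα : 2 < α) (hc : |c| < 1) :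
    ∫ x in Ioi (1 : ℝ), c * x ^ (1 - α) / (1 + c * x ^ (-α))
      = c * ∑' n : ℕ, (-c) ^ n / (α * ((n : ℝ) + 1) - 2) := by
  set F : ℕ → ℝ → ℝ := fun n x => (-c) ^ n * c * x ^ (1 - α * ((n : ℝ) + 1))
  have hβ : ∀ n : ℕ, 2 < α * ((n : ℝ) + 1) := fun n => by
    nlinarith [(Nat.cast_nonneg n : (0 : ℝ) ≤ n)]
  have hF_int : ∀ n, Integrable (F n) (volume.restrict (Ioi 1)) := fun n =>
    (integrableOn_Ioi_rpow_of_lt (by linarith [hβ n]) one_pos).const_mul _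
  have hF_norm : ∀ n : ℕ, ∫ x in Ioi (1 : ℝ), ‖F n x‖
      = |c| ^ (n + 1) * (α * ((n : ℝ) + 1) - 2)⁻¹ := by
    intro n
    rw [← integral_Ioi_one_rpow_one_sub (hβ n), ← integral_const_mul]
    refine setIntegral_congr_fun measurableSet_Ioi fun x hx => ?_
    rw [Real.norm_eq_abs, abs_mul, abs_mul, abs_pow, abs_neg,
      abs_of_nonneg (rpow_nonneg (zero_le_one.trans hx.le) _), pow_succ]
  have hF_sum : Summable fun n : ℕ => ∫ x in Ioi (1 : ℝ), ‖F n x‖ := by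
    simp_rw [hF_norm]
    refine Summable.of_nonneg_of_le (fun n => by have := hβ n; positivity) (fun n => ?_)
      (((summable_nat_add_iff 1).mpr (summable_geometric_of_lt_one (abs_nonneg c) hc)).mul_right
        (α - 2)⁻¹)
    gcongr
    nlinarith [(Nat.cast_nonneg n : (0 : ℝ) ≤ n)]
  have hF_integral : ∀ n : ℕ,
      ∫ x in Ioi (1 : ℝ), F n x = c * ((-c) ^ n / (α * ((n : ℝ) + 1) - 2)) := by
    intro n
    rw [integral_const_mul, integral_Ioi_one_rpow_one_sub (hβ n)]
    ring
  calc ∫ x in Ioi (1 : ℝ), c * x ^ (1 - α) / (1 + c * x ^ (-α))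
      = ∫ x in Ioi (1 : ℝ), ∑' n, F n x :=
        setIntegral_congr_fun measurableSet_Ioi fun x hx =>
          (hasSum_geometric_interference (by linarith) hc (le_of_lt hx)).tsum_eq.symm
    _ = ∑' n, ∫ x in Ioi (1 : ℝ), F n x :=
        (integral_tsum_of_summable_integral_norm hF_int hF_sum).symm
    _ = c * ∑' n : ℕ, (-c) ^ n / (α * ((n : ℝ) + 1) - 2) := by
        rw [tsum_congr hF_integral, tsum_mul_left]

lemma setIntegral_Ioi_interference_eq_sq_mul {α c u : ℝ} (hu : 0 < u) :
    ∫ ρ in Ioi u, c * u ^ α * ρ ^ (1 - α) / (1 + c * u ^ α * ρ ^ (-α))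
      = u ^ 2 * ∫ x in Ioi (1 : ℝ), c * x ^ (1 - α) / (1 + c * x ^ (-α)) := by
  set g : ℝ → ℝ := fun ρ => c * u ^ α * ρ ^ (1 - α) / (1 + c * u ^ α * ρ ^ (-α))
  have hscale :
      ∀ x ∈ Ioi (1 : ℝ), g (u * x) = u * (c * x ^ (1 - α) / (1 + c * x ^ (-α))) := by
    intro x hx
    have hx0 : 0 < x := one_pos.trans hx
    have hnum : c * u ^ α * (u * x) ^ (1 - α) = u * (c * x ^ (1 - α)) := by
      rw [mul_rpow hu.le hx0.le, rpow_sub hu, rpow_one]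
      field_simp
    have hden : c * u ^ α * (u * x) ^ (-α) = c * x ^ (-α) := by
      rw [mul_rpow hu.le hx0.le, rpow_neg hu.le]
      field_simp
    simp only [g]
    rw [hnum, hden, mul_div_assoc]
  have hsub := integral_comp_mul_left_Ioi g 1 hu
  rw [mul_one, smul_eq_mul, setIntegral_congr_fun measurableSet_Ioi hscale, integral_const_mul,
    eq_inv_mul_iff_mul_eq₀ hu.ne'] at hsub
  rw [← hsub]
  ring

lemma tendsto_exp_neg_mul_sq_mul_quadratic {a : ℝ} (ha : 0 < a) (p q : ℝ) :
    Tendsto (fun x : ℝ => exp (-(a * x ^ 2)) * (p * x ^ 2 + q)) atTop (𝓝 0) := by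
  have hax : Tendsto (fun x : ℝ => a * x ^ 2) atTop atTop :=
    (tendsto_pow_atTop two_ne_zero).const_mul_atTop ha
  have hexp : Tendsto (fun x : ℝ => exp (-(a * x ^ 2))) atTop (𝓝 0) :=
    tendsto_exp_neg_atTop_nhds_zero.comp hax
  have hmul : Tendsto (fun x : ℝ => a * x ^ 2 * exp (-(a * x ^ 2))) atTop (𝓝 0) := by
    simpa [Function.comp_def] using (tendsto_pow_mul_exp_neg_atTop_nhds_zero 1).comp hax
  convert (hmul.const_mul (p / a)).add (hexp.const_mul q) using 1
  · ext x
    field_simp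
  · simp

lemma integral_Ioi_mul_exp_neg_mul_sq_mul_quadratic {a p q r : ℝ} (ha : 0 < a) (hp : 0 ≤ p)
    (hq : 0 ≤ q) (hr : 0 ≤ r) :
    ∫ x in Ioi r, x * exp (-(a * x ^ 2)) * (p * x ^ 2 + q)
      = exp (-(a * r ^ 2)) * (p * r ^ 2 + p / a + q) / (2 * a) := by
  set G : ℝ → ℝ := fun x => -(exp (-(a * x ^ 2)) * (p * x ^ 2 + p / a + q)) / (2 * a)
  have hderiv : ∀ x ∈ Ioi r, HasDerivAt G (x * exp (-(a * x ^ 2)) * (p * x ^ 2 + q)) x := by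
    intro x _
    have hexp : HasDerivAt (fun x : ℝ => exp (-(a * x ^ 2)))
        (exp (-(a * x ^ 2)) * -(a * (2 * x))) x :=
      ((hasDerivAt_pow 2 x).const_mul a).neg.exp.congr_deriv (by norm_num)
    have hpoly : HasDerivAt (fun x : ℝ => p * x ^ 2 + p / a + q) (p * (2 * x)) x :=
      (((hasDerivAt_pow 2 x).const_mul p).add_const _).add_const _ |>.congr_deriv (by norm_num)
    refine ((hexp.mul hpoly).neg.div_const (2 * a)).congr_deriv ?_
    field_simp
    ring
  have hnonneg : ∀ x ∈ Ioi r, 0 ≤ x * exp (-(a * x ^ 2)) * (p * x ^ 2 + q) := fun x hx => by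
    have : 0 ≤ x := hr.trans hx.le
    positivity
  have hlim : Tendsto G atTop (𝓝 0) := by
    simpa [G, add_assoc] using
      (tendsto_exp_neg_mul_sq_mul_quadratic ha p (p / a + q)).neg.div_const (2 * a)
  rw [integral_Ioi_of_hasDerivAt_of_nonneg (by fun_prop) hderiv hnonneg hlim]
  simp only [G]
  ring

lemma integral_nearest_secondNearest_mul_sq {a J : ℝ} (ha : 0 < a) :
    ∫ r in Ioi (0 : ℝ), ∫ u in Ioi r, 4 * a ^ 2 * r * u * exp (-(a * u ^ 2)) * (u ^ 2 * J)
      = 2 * J / a := by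
  have hinner : ∀ r ∈ Ioi (0 : ℝ),
      ∫ u in Ioi r, 4 * a ^ 2 * r * u * exp (-(a * u ^ 2)) * (u ^ 2 * J)
        = 2 * a * J * (r * exp (-(a * r ^ 2)) * (1 * r ^ 2 + 1 / a)) := by
    intro r hr
    calc ∫ u in Ioi r, 4 * a ^ 2 * r * u * exp (-(a * u ^ 2)) * (u ^ 2 * J)
        = 4 * a ^ 2 * r * J * ∫ u in Ioi r, u * exp (-(a * u ^ 2)) * (1 * u ^ 2 + 0) := by
          rw [← integral_const_mul]
          congr 1 with u
          ring
      _ = 2 * a * J * (r * exp (-(a * r ^ 2)) * (1 * r ^ 2 + 1 / a)) := by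
          rw [integral_Ioi_mul_exp_neg_mul_sq_mul_quadratic ha zero_le_one le_rfl hr.le]
          field_simp
          ring
  rw [setIntegral_congr_fun measurableSet_Ioi hinner, integral_const_mul,
    integral_Ioi_mul_exp_neg_mul_sq_mul_quadratic ha zero_le_one (by positivity) le_rfl]
  simp only [ne_eq, OfNat.ofNat_ne_zero, not_false_eq_true, zero_pow, mul_zero, neg_zero, exp_zero]
  field_simp
  ring

/-- Closed-form exponent of the Laplace transform of the interference in the
low-i₀ regime under minimum path loss association: the triple integral equals
4·s·i₀ Σ_{n≥0} (−s i₀)ⁿ/(α(n+1) − 2) (the series form of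
(4 s i₀/(α−2)) ₂F₁(1,(α−2)/α;2−2/α;−s i₀)), and in particular is
independent of the base station density λ. -/
theorem stmt_8 (α lam i0 s : ℝ) (hα : 2 < α) (hlam : 0 < lam)
    (hi0 : 0 < i0) (hs : 0 < s) (hsi : s * i0 < 1) :
    2 * π * lam *
      (∫ r in Ioi (0:ℝ), ∫ u in Ioi r,
        4 * (π * lam) ^ 2 * r * u * Real.exp (-(π * lam * u ^ 2)) *
          (∫ ρ in Ioi u,
            (s * i0 * u ^ α * ρ ^ (1 - α)) / (1 + s * i0 * u ^ α * ρ ^ (-α))))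
    = 4 * (s * i0) * ∑' n : ℕ, (-(s * i0)) ^ n / (α * ((n : ℝ) + 1) - 2) := by
  have hπlam : 0 < π * lam := by positivity
  have hc : |s * i0| < 1 := by rwa [abs_of_pos (by positivity)]
  set J := ∫ x in Ioi (1 : ℝ), s * i0 * x ^ (1 - α) / (1 + s * i0 * x ^ (-α)) with hJ
  calc _ = 2 * π * lam * ∫ r in Ioi (0 : ℝ), ∫ u in Ioi r,
          4 * (π * lam) ^ 2 * r * u * exp (-(π * lam * u ^ 2)) * (u ^ 2 * J) := by
        congr 1
        refine setIntegral_congr_fun measurableSet_Ioi fun r hr => ?_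
        refine setIntegral_congr_fun measurableSet_Ioi fun u hu => ?_
        rw [setIntegral_Ioi_interference_eq_sq_mul (lt_trans hr hu)]
    _ = 2 * π * lam * (2 * J / (π * lam)) := by
        rw [integral_nearest_secondNearest_mul_sq hπlam]
    _ = 4 * J := by
        field_simp
        ring
    _ = _ := by
        rw [hJ, integral_Ioi_one_interference_eq_tsum hα hc]
        ring
end

section
/- Let α > 2, λ > 0 and i_0 > 0 be real numbers. Then 2πλ ∫_{r=0}^{∞} ∫_{u=r}^{∞} 4(πλ)^2 r u e^{−πλ u^2} · ( i_0 u^2 / (α − 2) ) du dr = 4 i_0 / (α − 2). In particular, the mean of the uplink interference in the low-i_0 regime under minimum path loss association equals 4 i_0/(α−2) and is independent of the base station density λ. -/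
/-!
With `a = πλ` the integrand is `4a² · i₀/(α-2) · r u³ e^{-a u²}`. Both the inner and the outer
integral have elementary antiderivatives of the form `-(c u² + d) e^{-a u²}`: the inner one gives
`(r²/(2a) + 1/(2a²)) e^{-a r²}`, and then the outer one gives `1/(2a³)`. Hence the left side is
`2a · 4a² · i₀/(α-2) / (2a³) = 4 i₀/(α-2)`, and `λ` cancels.
-/

open MeasureTheory Real Set Filter Topology

section GaussianMoments

variable {a : ℝ}

lemma integrable_pow_mul_exp_neg_mul_sq (ha : 0 < a) (n : ℕ) :
    Integrable fun u : ℝ => u ^ n * exp (-(a * u ^ 2)) := by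
  have hn : (-1 : ℝ) < n := by linarith [(Nat.cast_nonneg n : (0 : ℝ) ≤ n)]
  simpa only [rpow_natCast, neg_mul] using integrable_rpow_mul_exp_neg_mul_sq ha hn

lemma tendsto_quadratic_mul_exp_neg_mul_sq (ha : 0 < a) (c d : ℝ) :
    Tendsto (fun u : ℝ => (c * u ^ 2 + d) * exp (-(a * u ^ 2))) atTop (𝓝 0) := by
  have hsq : Tendsto (fun u : ℝ => a * u ^ 2) atTop atTop :=
    (tendsto_pow_atTop two_ne_zero).const_mul_atTop ha
  have hpow : Tendsto (fun u : ℝ => a * u ^ 2 * exp (-(a * u ^ 2))) atTop (𝓝 0) := by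
    simpa only [pow_one, Function.comp_def] using
      (tendsto_pow_mul_exp_neg_atTop_nhds_zero 1).comp hsq
  have hexp : Tendsto (fun u : ℝ => exp (-(a * u ^ 2))) atTop (𝓝 0) :=
    tendsto_exp_neg_atTop_nhds_zero.comp hsq
  have hsum := (hpow.const_mul (c / a)).add (hexp.const_mul d)
  rw [mul_zero, mul_zero, add_zero] at hsum
  refine hsum.congr fun u => ?_
  field_simp

lemma hasDerivAt_quadratic_mul_exp_neg_mul_sq (a c d x : ℝ) :
    HasDerivAt (fun u : ℝ => (c * u ^ 2 + d) * exp (-(a * u ^ 2)))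
      (-((2 * a * c) * x ^ 3 + (2 * a * d - 2 * c) * x) * exp (-(a * x ^ 2))) x := by
  have hquad : HasDerivAt (fun u : ℝ => c * u ^ 2 + d) (c * (2 * x)) x := by
    simpa using ((hasDerivAt_pow 2 x).const_mul c).add_const d
  have hexp : HasDerivAt (fun u : ℝ => exp (-(a * u ^ 2)))
      (exp (-(a * x ^ 2)) * -(a * (2 * x))) x := by
    simpa using (((hasDerivAt_pow 2 x).const_mul a).neg).exp
  exact (hquad.mul hexp).congr_deriv (by ring)

-- The coefficients are those of `-(d/du) ((c u² + d) e^{-a u²})`.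
lemma integral_Ioi_cubic_mul_exp_neg_mul_sq (ha : 0 < a) (c d r : ℝ) :
    ∫ u in Ioi r, ((2 * a * c) * u ^ 3 + (2 * a * d - 2 * c) * u) * exp (-(a * u ^ 2))
      = (c * r ^ 2 + d) * exp (-(a * r ^ 2)) := by
  have hint : IntegrableOn
      (fun u : ℝ => -((2 * a * c) * u ^ 3 + (2 * a * d - 2 * c) * u) * exp (-(a * u ^ 2)))
      (Ioi r) := by
    refine (((integrable_pow_mul_exp_neg_mul_sq ha 3).const_mul (-(2 * a * c))).add
      ((integrable_pow_mul_exp_neg_mul_sq ha 1).const_mul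
        (-(2 * a * d - 2 * c)))).integrableOn.congr_fun (fun u _ => ?_) measurableSet_Ioi
    simp only [Pi.add_apply]
    ring
  have h := integral_Ioi_of_hasDerivAt_of_tendsto'
    (fun x _ => hasDerivAt_quadratic_mul_exp_neg_mul_sq a c d x) hint
    (tendsto_quadratic_mul_exp_neg_mul_sq ha c d)
  simp only [neg_mul, integral_neg, zero_sub, neg_inj] at h
  exact h

lemma integral_Ioi_pow_three_mul_exp_neg_mul_sq (ha : 0 < a) (r : ℝ) :
    ∫ u in Ioi r, u ^ 3 * exp (-(a * u ^ 2))
      = (r ^ 2 / (2 * a) + 1 / (2 * a ^ 2)) * exp (-(a * r ^ 2)) := by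
  have h := integral_Ioi_cubic_mul_exp_neg_mul_sq ha (1 / (2 * a)) (1 / (2 * a ^ 2)) r
  have hc : 2 * a * (1 / (2 * a)) = 1 := by field_simp
  have hd : 2 * a * (1 / (2 * a ^ 2)) - 2 * (1 / (2 * a)) = 0 := by field_simp; ring
  simp only [hc, hd, one_mul, zero_mul, add_zero] at h
  rw [h]
  ring

lemma integral_Ioi_mul_integral_Ioi_pow_three_mul_exp_neg_mul_sq (ha : 0 < a) :
    ∫ r in Ioi (0 : ℝ), r * ∫ u in Ioi r, u ^ 3 * exp (-(a * u ^ 2)) = 1 / (2 * a ^ 3) := by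
  have h := integral_Ioi_cubic_mul_exp_neg_mul_sq ha (1 / (4 * a ^ 2)) (1 / (2 * a ^ 3)) 0
  simp_rw [integral_Ioi_pow_three_mul_exp_neg_mul_sq ha]
  convert h using 1
  · congr 1 with r
    field_simp
    ring
  · simp

end GaussianMoments

theorem stmt_9_general (α lam i0 : ℝ) (hlam : 0 < lam) :
    2 * π * lam *
      (∫ r in Ioi (0:ℝ), ∫ u in Ioi r,
        4 * (π * lam) ^ 2 * r * u * Real.exp (-(π * lam * u ^ 2)) *
          (i0 * u ^ 2 / (α - 2)))
    = 4 * i0 / (α - 2) := by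
  have ha : 0 < π * lam := by positivity
  have hinner : ∀ r : ℝ, ∫ u in Ioi r,
      4 * (π * lam) ^ 2 * r * u * exp (-(π * lam * u ^ 2)) * (i0 * u ^ 2 / (α - 2))
      = 4 * (π * lam) ^ 2 * (i0 / (α - 2)) *
          (r * ∫ u in Ioi r, u ^ 3 * exp (-(π * lam * u ^ 2))) := fun r => by
    rw [← integral_const_mul, ← integral_const_mul]
    congr 1 with u
    ring
  simp_rw [hinner]
  rw [integral_const_mul, integral_Ioi_mul_integral_Ioi_pow_three_mul_exp_neg_mul_sq ha]
  field_simp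

/-- Mean of the uplink interference in the low-i₀ regime under minimum path
loss association: 2πλ times the integral of i₀u²/(α−2) against the joint pdf
of the nearest and second-nearest distances equals 4i₀/(α−2), independently
of the base station density λ (Remark 1). -/
theorem stmt_9 (α lam i0 : ℝ) (hα : 2 < α) (hlam : 0 < lam) (hi0 : 0 < i0) :
    2 * π * lam *
      (∫ r in Ioi (0:ℝ), ∫ u in Ioi r,
        4 * (π * lam) ^ 2 * r * u * Real.exp (-(π * lam * u ^ 2)) *
          (i0 * u ^ 2 / (α - 2)))
    = 4 * i0 / (α - 2) :=
  stmt_9_general α lam i0 hlam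
end
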